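/- Reflection identity for the top-count function: let v be an anonymous voting rule on m ≥ 3 candidates that is pairwise responsive, pairwise isolated, and satisfies ε-strong unanimity, and let v'(x,j) be the selection probability of x on the canonical profile with exactly j voters ranking x first. Then for every candidate x and every q ∈ {0,...,n}, |v'(x, n−q) − (1 − v'(x, q))| ≤ O(mε) (with an explicit constant, e.g. ≤ 66mε). -/

import Mathlib

open Finset

variable {C : Type*}

/-- A preference ordering on `C`: a ranking of the candidates, where a higher
rank means more preferred. -/
abbrev Pref (C : Type*) [Fintype C] := C ≃ Fin (Fintype.card C)

/-- `x` is strictly preferred to `y` in `P`. -/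
def PrefOver [Fintype C] (P : Pref C) (x y : C) : Prop := P y < P x

/-- The top (most preferred) candidate of `P`. -/
def topC [Fintype C] [Nonempty C] (P : Pref C) : C :=
  P.symm ⟨Fintype.card C - 1, Nat.sub_lt Fintype.card_pos Nat.one_pos⟩

/-- `x` is directly above `y` in `P`. -/
def DirAbove [Fintype C] (P : Pref C) (x y : C) : Prop := (P x : ℕ) = (P y : ℕ) + 1

/-- The ordering `P` with candidates `x` and `y` swapped. -/
def swapIn [Fintype C] [DecidableEq C] (P : Pref C) (x y : C) : Pref C :=
  (Equiv.swap x y).trans P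

/-- A (randomized) voting rule: nonnegative selection probabilities summing to 1. -/
def IsVotingRule [Fintype C] {n : ℕ} (v : (Fin n → Pref C) → C → ℝ) : Prop :=
  (∀ Pvec x, 0 ≤ v Pvec x) ∧ (∀ Pvec, ∑ x, v Pvec x = 1)

def Anonymous [Fintype C] {n : ℕ} (v : (Fin n → Pref C) → C → ℝ) : Prop :=
  ∀ (σ : Equiv.Perm (Fin n)) (Pvec : Fin n → Pref C) (x : C), v (Pvec ∘ σ) x = v Pvec x

/-- Expected utility of a distribution `d` over candidates under utility `u`. -/
def EU [Fintype C] (u : C → ℝ) (d : C → ℝ) : ℝ := ∑ x, u x * d x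

/-- A `[0,1]`-valued utility function consistent with the ordering `P`. -/
def Consistent [Fintype C] (u : C → ℝ) (P : Pref C) : Prop :=
  (∀ x, u x ∈ Set.Icc (0 : ℝ) 1) ∧ ∀ x y, u x > u y ↔ PrefOver P x y

/-- The random dictatorship voting rule. -/
noncomputable def vdict [Fintype C] [Nonempty C] [DecidableEq C] {n : ℕ}
    (Pvec : Fin n → Pref C) (x : C) : ℝ :=
  ((Finset.univ.filter (fun i => topC (Pvec i) = x)).card : ℝ) / n

def StrategyProofRule [Fintype C] {n : ℕ} (v : (Fin n → Pref C) → C → ℝ) : Prop :=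
  ∀ (i : Fin n) (Pvec : Fin n → Pref C) (P' : Pref C) (u : C → ℝ),
    Consistent u (Pvec i) → EU u (v (Function.update Pvec i P')) ≤ EU u (v Pvec)

def IsBelief [Fintype C] [DecidableEq C] (φ : Pref C → ℝ) : Prop :=
  (∀ P, 0 ≤ φ P) ∧ ∑ P, φ P = 1

/-- The profile where voter `i` submits `Pi` and the other voters submit `Q`. -/
def profileWith [Fintype C] {n : ℕ} (i : Fin n) (Q : {j : Fin n // j ≠ i} → Pref C)
    (Pi : Pref C) : Fin n → Pref C :=
  fun j => if h : j = i then Pi else Q ⟨j, h⟩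

/-- Expected utility for voter `i` reporting `Pi` when the others' orderings are
i.i.d. with distribution `φ`. -/
noncomputable def beliefEU [Fintype C] [DecidableEq C] {n : ℕ}
    (v : (Fin n → Pref C) → C → ℝ) (i : Fin n) (φ : Pref C → ℝ) (u : C → ℝ)
    (Pi : Pref C) : ℝ :=
  ∑ Q : {j : Fin n // j ≠ i} → Pref C, (∏ j, φ (Q j)) * EU u (v (profileWith i Q Pi))

/-- Strategy-proofness with respect to a single i.i.d. belief `φ`. -/
def SPwrtBelief [Fintype C] [DecidableEq C] {n : ℕ}
    (v : (Fin n → Pref C) → C → ℝ) (φ : Pref C → ℝ) : Prop :=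
  ∀ (i : Fin n) (Pi Pi' : Pref C) (u : C → ℝ),
    Consistent u Pi → beliefEU v i φ u Pi' ≤ beliefEU v i φ u Pi

/-- Weak strategy-proofness: strategy-proofness w.r.t. all i.i.d. beliefs. -/
def WeaklySP [Fintype C] [DecidableEq C] {n : ℕ}
    (v : (Fin n → Pref C) → C → ℝ) : Prop :=
  ∀ φ : Pref C → ℝ, IsBelief φ → SPwrtBelief v φ

def ParetoEff [Fintype C] {n : ℕ} (ε : ℝ) (v : (Fin n → Pref C) → C → ℝ) : Prop :=
  ∀ (x y : C) (Pvec : Fin n → Pref C), (∀ i, PrefOver (Pvec i) x y) → v Pvec y ≤ ε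

def StrongUnanimity [Fintype C] [Nonempty C] {n : ℕ} (ε : ℝ)
    (v : (Fin n → Pref C) → C → ℝ) : Prop :=
  ∀ (x : C) (Pvec : Fin n → Pref C), (∀ i, topC (Pvec i) = x) → 1 - ε ≤ v Pvec x

def WeakUnanimity [Fintype C] [Nonempty C] {n : ℕ} (ε : ℝ)
    (v : (Fin n → Pref C) → C → ℝ) : Prop :=
  ∀ P : Pref C, 1 - ε ≤ v (fun _ => P) (topC P)

def SuperWeakUnanimity [Fintype C] [Nonempty C] {n : ℕ} (ε : ℝ)
    (v : (Fin n → Pref C) → C → ℝ) : Prop :=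
  ∀ x : C, ∃ Pvec : Fin n → Pref C, (∀ i, topC (Pvec i) = x) ∧ 1 - ε ≤ v Pvec x

def PairwiseResponsive [Fintype C] [DecidableEq C] {n : ℕ}
    (v : (Fin n → Pref C) → C → ℝ) : Prop :=
  ∀ (Pvec : Fin n → Pref C) (i : Fin n) (x y z : C),
    DirAbove (Pvec i) x y → z ≠ x → z ≠ y →
      v (Function.update Pvec i (swapIn (Pvec i) x y)) z = v Pvec z

def PairwiseIsolated [Fintype C] [DecidableEq C] {n : ℕ}
    (v : (Fin n → Pref C) → C → ℝ) : Prop :=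
  ∀ (i : Fin n) (Pvec Pvec' : Fin n → Pref C) (x y : C),
    DirAbove (Pvec i) x y → Pvec' i = Pvec i →
    (∀ j, j ≠ i → (PrefOver (Pvec j) x y ↔ PrefOver (Pvec' j) x y)) →
    v (Function.update Pvec' i (swapIn (Pvec' i) x y)) y - v Pvec' y =
      v (Function.update Pvec i (swapIn (Pvec i) x y)) y - v Pvec y

/-- The ordering `e` with candidate `x` moved to the top (relative order of the
other candidates preserved). -/
def moveToTop [Fintype C] [DecidableEq C] (e : Pref C) (x : C) : Pref C :=
  e.trans ((Fin.revPerm.trans (Fin.cycleRange (e x).rev)).trans Fin.revPerm)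

/-- The ordering `e` with candidate `x` moved to the bottom (relative order of
the other candidates preserved). -/
def moveToBot [Fintype C] [DecidableEq C] (e : Pref C) (x : C) : Pref C :=
  e.trans (Fin.cycleRange (e x))

/-- The canonical profile `P⃗^{x,j}`: the first `j` voters rank `x` on top and
the remaining voters rank `x` on the bottom, with the other candidates ordered
according to the fixed ordering `e`. -/
def canonProfile [Fintype C] [DecidableEq C] {n : ℕ} (e : Pref C) (x : C) (j : ℕ) :
    Fin n → Pref C :=
  fun i => if (i : ℕ) < j then moveToTop e x else moveToBot e x

/-- `v'(x,j)`: the selection probability of `x` on the canonical profile with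
exactly `j` voters ranking `x` first. -/
def vTopCount [Fintype C] [DecidableEq C] {n : ℕ} (v : (Fin n → Pref C) → C → ℝ)
    (e : Pref C) (x : C) (j : ℕ) : ℝ :=
  v (canonProfile e x j) x

/-!
Let `T` be `e` with `x` moved to the top, `y` the runner-up of `T`, and `B` the ordering `T` with
`x` and `y` exchanged. In the canonical profile and in the profile where the first `j` voters
report `T` and the others `B`, the candidate `y` Pareto-dominates every other candidate except
`x`, so `x` and `y` share all but `(m - 2) ε` of the probability. Lowering `x` from second place in
`B` to the bottom never passes `y`, so by pairwise responsiveness `y` has the same probability in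
both profiles; hence `v'(x, j)` is within `(m - 2) ε` of `g j := v(T^j B^(n-j), x)`.

By anonymity and pairwise isolation, `g` has the same second differences as the corresponding
family for any ordering `D` in which `y` is directly above `x`. Choosing `D` with a third candidate
above `y` makes the probability of `x` in that family at most `ε` throughout, so `g q + g (n - q)`
is within `2 ε` of `g 0 + g n`, which is within `ε` of `1` by unanimity.
-/

lemma Fin.val_cycleRange {m : ℕ} (i j : Fin m) :
    (Fin.cycleRange i j : ℕ) =
      if (j : ℕ) < i then (j : ℕ) + 1 else if (j : ℕ) = i then 0 else j := by
  rcases lt_trichotomy j i with h | rfl | h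
  · simp [Fin.lt_def.1 h, Fin.coe_cycleRange_of_lt h]
  · cases m with
    | zero => exact j.elim0
    | succ m => simp
  · simp [(Fin.lt_def.1 h).not_gt, (Fin.val_ne_of_ne h.ne'), Fin.cycleRange_of_gt h]

lemma Finset.apply_piecewise_eq_of_update {ι α β : Type*} [DecidableEq ι]
    {F : (ι → α) → β} {p : α → Prop} {g : α → α}
    (h : ∀ P i, p (P i) → F (Function.update P i (g (P i))) = F P)
    (A : Finset ι) (P : ι → α) (hA : ∀ i ∈ A, p (P i)) :
    F (A.piecewise (fun i => g (P i)) P) = F P := by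
  induction A using Finset.induction_on with
  | empty => simp
  | insert a A ha ih =>
    have hPa : A.piecewise (fun i => g (P i)) P a = P a := Finset.piecewise_eq_of_notMem _ _ _ ha
    have := h (A.piecewise (fun i => g (P i)) P) a (hPa ▸ hA a (mem_insert_self a A))
    rw [Finset.piecewise_insert, ← hPa, this, ih fun i hi => hA i (mem_insert_of_mem hi)]

lemma add_eq_add_of_second_diff_eq_zero {D : ℕ → ℝ} {n : ℕ}
    (h : ∀ k, k + 2 ≤ n → D (k + 2) - 2 * D (k + 1) + D k = 0) {q : ℕ} (hq : q ≤ n) :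
    D q + D (n - q) = D 0 + D n := by
  have affine : ∀ k ≤ n, D k = D 0 + k * (D 1 - D 0) := by
    intro k
    induction k using Nat.strong_induction_on with
    | _ k ih =>
      match k with
      | 0 => simp
      | 1 => simp
      | k + 2 =>
        intro hk
        have := h k hk
        rw [ih k (by omega) (by omega), ih (k + 1) (by omega) (by omega)] at this
        push_cast at this ⊢
        linarith
  rw [affine q hq, affine (n - q) (by omega), affine n le_rfl, Nat.cast_sub hq]
  ring

section Orderings

variable [Fintype C]

lemma Pref.val_ne {R : Pref C} {c d : C} (h : c ≠ d) : (R c : ℕ) ≠ R d :=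
  Fin.val_injective.ne (R.injective.ne h)

lemma topC_eq_of_val [Nonempty C] {R : Pref C} {c : C} (h : (R c : ℕ) = Fintype.card C - 1) :
    topC R = c := by
  rw [topC, Equiv.symm_apply_eq]
  exact Fin.ext h.symm

lemma prefOver_of_dirAbove {P : Pref C} {a b : C} (h : DirAbove P a b) : PrefOver P a b := by
  unfold DirAbove at h
  simp only [PrefOver, Fin.lt_def]
  omega

variable [DecidableEq C]

lemma swapIn_apply (R : Pref C) (a b c : C) : swapIn R a b c = R (Equiv.swap a b c) := rfl

lemma swapIn_swapIn (R : Pref C) (a b : C) : swapIn (swapIn R a b) b a = R := by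
  ext c
  simp [swapIn_apply, Equiv.swap_comm a b]

lemma not_prefOver_swapIn_of_dirAbove {P : Pref C} {a b : C} (h : DirAbove P a b) :
    ¬PrefOver (swapIn P a b) a b := by
  unfold DirAbove at h
  simp only [PrefOver, Fin.lt_def, swapIn_apply, Equiv.swap_apply_left, Equiv.swap_apply_right]
  omega

lemma moveToTop_val (R : Pref C) (x c : C) :
    (moveToTop R x c : ℕ) =
      if c = x then Fintype.card C - 1 else if (R x : ℕ) < R c then (R c : ℕ) - 1 else R c := by
  have hc := (R c).isLt
  have hx := (R x).isLt
  simp only [moveToTop, Equiv.trans_apply, Fin.revPerm_apply, Fin.val_rev, Fin.val_cycleRange]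
  by_cases hcx : c = x
  · simp [hcx]
  · have := Pref.val_ne (R := R) hcx
    simp only [hcx, if_false]
    split_ifs <;> omega

lemma moveToBot_val (R : Pref C) (x c : C) :
    (moveToBot R x c : ℕ) =
      if c = x then 0 else if (R c : ℕ) < R x then (R c : ℕ) + 1 else R c := by
  simp only [moveToBot, Equiv.trans_apply, Fin.val_cycleRange]
  by_cases hcx : c = x
  · simp [hcx]
  · have := Pref.val_ne (R := R) hcx
    simp only [hcx, if_false]
    split_ifs <;> omega

lemma moveToTop_eq_self {R : Pref C} {x : C} (h : (R x : ℕ) = Fintype.card C - 1) :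
    moveToTop R x = R := by
  ext c
  have := (R c).isLt
  simp only [moveToTop_val]
  split_ifs with hcx hxc
  · simp_all
  · omega
  · rfl

lemma moveToBot_eq_self {R : Pref C} {x : C} (h : (R x : ℕ) = 0) : moveToBot R x = R := by
  ext c
  simp only [moveToBot_val]
  split_ifs with hcx hcx'
  · simp_all
  · omega
  · rfl

lemma moveToTop_swapIn {R : Pref C} {u d : C} (h : DirAbove R u d) :
    moveToTop (swapIn R u d) d = moveToTop R d := by
  unfold DirAbove at h
  ext c
  simp only [moveToTop_val, swapIn_apply, Equiv.swap_apply_right]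
  rcases eq_or_ne c u with rfl | hcu
  · have hcd : c ≠ d := by rintro rfl; omega
    simp only [Equiv.swap_apply_left, hcd, if_false]
    split_ifs <;> omega
  rcases eq_or_ne c d with rfl | hcd
  · simp
  rw [Equiv.swap_apply_of_ne_of_ne hcu hcd]
  have := Pref.val_ne (R := R) hcu
  simp only [hcd, if_false]
  split_ifs <;> omega

lemma moveToBot_swapIn {R : Pref C} {x d : C} (h : DirAbove R x d) :
    moveToBot (swapIn R x d) x = moveToBot R x := by
  unfold DirAbove at h
  ext c
  simp only [moveToBot_val, swapIn_apply, Equiv.swap_apply_left]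
  rcases eq_or_ne c x with rfl | hcx
  · simp
  rcases eq_or_ne c d with rfl | hcd
  · simp only [Equiv.swap_apply_right, hcx, if_false]
    split_ifs <;> omega
  rw [Equiv.swap_apply_of_ne_of_ne hcx hcd]
  have := Pref.val_ne (R := R) hcd
  simp only [hcx, if_false]
  split_ifs <;> omega

lemma moveToBot_moveToTop (R : Pref C) (x : C) : moveToBot (moveToTop R x) x = moveToBot R x := by
  ext c
  rcases eq_or_ne c x with rfl | hcx
  · simp [moveToBot_val]
  have hc := (R c).isLt
  have := Pref.val_ne (R := R) hcx
  simp only [moveToBot_val, moveToTop_val, hcx, if_false]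
  split_ifs <;> omega

lemma prefOver_moveToBot {R : Pref C} {x c d : C} (h : PrefOver R c d) (hc : c ≠ x)
    (hd : d ≠ x) :
    PrefOver (moveToBot R x) c d := by
  have := Pref.val_ne (R := R) hc
  simp only [PrefOver, Fin.lt_def, moveToBot_val, hc, hd, if_false] at h ⊢
  split_ifs <;> omega

lemma exists_dirAbove_not_top (R : Pref C) (hm : 3 ≤ Fintype.card C) {a b : C} (hab : a ≠ b) :
    ∃ D : Pref C, DirAbove D a b ∧ ∃ z, z ≠ a ∧ z ≠ b ∧ PrefOver D z a := by
  set D := moveToBot (moveToBot R a) b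
  have hRa : (moveToBot R a a : ℕ) = 0 := by simp [moveToBot_val]
  have hRb := Pref.val_ne (R := moveToBot R a) hab.symm
  have hDb : (D b : ℕ) = 0 := by simp [D, moveToBot_val]
  have hDa : (D a : ℕ) = 1 := by
    rw [moveToBot_val, if_neg hab, hRa]
    split_ifs <;> omega
  have hz : (D (D.symm ⟨2, by omega⟩) : ℕ) = 2 := by simp
  refine ⟨D, by simp [DirAbove, hDa, hDb], D.symm ⟨2, by omega⟩, ?_, ?_, ?_⟩
  · rintro h; rw [h] at hz; omega
  · rintro h; rw [h] at hz; omega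
  · simp only [PrefOver, Fin.lt_def]; omega

end Orderings

namespace IsVotingRule

variable [Fintype C] {n : ℕ} {v : (Fin n → Pref C) → C → ℝ} (hv : IsVotingRule v)
  (P : Fin n → Pref C)
include hv

lemma le_one (c : C) : v P c ≤ 1 :=
  (Finset.single_le_sum (fun x _ => hv.1 P x) (mem_univ c)).trans_eq (hv.2 P)

lemma add_le_one {c d : C} (hcd : c ≠ d) : v P c + v P d ≤ 1 := by
  classical
  rw [← hv.2 P, ← Finset.sum_pair hcd]
  exact Finset.sum_le_univ_sum_of_nonneg (hv.1 P)

lemma one_sub_le_add [DecidableEq C] {x y : C} (hxy : x ≠ y) {ε : ℝ}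
    (h : ∀ c, c ≠ x → c ≠ y → v P c ≤ ε) :
    1 - (Fintype.card C - 2) * ε ≤ v P x + v P y := by
  have hcard : ((univ \ {x, y}).card : ℝ) = Fintype.card C - 2 := by
    rw [Finset.card_sdiff_of_subset (subset_univ _), Finset.card_pair hxy, card_univ,
      Nat.cast_sub (card_pair hxy ▸ card_le_univ {x, y})]
    norm_num
  have hrest : ∑ c ∈ univ \ {x, y}, v P c ≤ (Fintype.card C - 2) * ε := by
    rw [← hcard, ← nsmul_eq_mul]
    refine Finset.sum_le_card_nsmul _ _ _ fun c hc => ?_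
    simp only [mem_sdiff, mem_univ, mem_insert, mem_singleton, true_and, not_or] at hc
    exact h c hc.1 hc.2
  have := Finset.sum_sdiff (f := v P) (subset_univ {x, y})
  rw [hv.2 P, Finset.sum_pair hxy] at this
  linarith

end IsVotingRule

namespace PairwiseResponsive

variable [Fintype C] [DecidableEq C] {n : ℕ} {v : (Fin n → Pref C) → C → ℝ}
  (hpr : PairwiseResponsive v)
include hpr

/-- Raising `d` one rank at a time only swaps it with candidates above `w`. -/
lemma apply_update_moveToTop (P : Fin n → Pref C) (i : Fin n) {d w : C}
    (hdw : PrefOver (P i) d w) :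
    v (Function.update P i (moveToTop (P i) d)) w = v P w := by
  induction hk : Fintype.card C - 1 - P i d generalizing P with
  | zero =>
    have := (P i d).isLt
    rw [moveToTop_eq_self (by omega), Function.update_eq_self]
  | succ k ih =>
    have hr : (P i d : ℕ) + 1 < Fintype.card C := by omega
    set u := (P i).symm ⟨P i d + 1, hr⟩
    have hu : P i u = ⟨P i d + 1, hr⟩ := (P i).apply_symm_apply _
    have hud : DirAbove (P i) u d := by simp [DirAbove, hu]
    have hwu : w ≠ u := by rintro rfl; simp [PrefOver, Fin.lt_def, hu] at hdw
    have hwd : w ≠ d := by rintro rfl; exact lt_irrefl _ hdw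
    have hstep := hpr P i u d w hud hwu hwd
    set P' := Function.update P i (swapIn (P i) u d)
    have hP'i : P' i = swapIn (P i) u d := Function.update_self ..
    rw [← hstep, ← ih P' ?_ ?_, hP'i, moveToTop_swapIn hud, Function.update_idem]
    · simp only [PrefOver, Fin.lt_def, hP'i, swapIn_apply, Equiv.swap_apply_right,
        Equiv.swap_apply_of_ne_of_ne hwu hwd, hu] at hdw ⊢
      omega
    · simp only [hP'i, swapIn_apply, Equiv.swap_apply_right, hu]
      omega

lemma apply_update_moveToBot (P : Fin n → Pref C) (i : Fin n) {x c : C}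
    (hcx : PrefOver (P i) c x) :
    v (Function.update P i (moveToBot (P i) x)) c = v P c := by
  induction hk : (P i x : ℕ) generalizing P with
  | zero => rw [moveToBot_eq_self hk, Function.update_eq_self]
  | succ k ih =>
    set d := (P i).symm ⟨k, by omega⟩
    have hd : P i d = ⟨k, by omega⟩ := (P i).apply_symm_apply _
    have hxd : DirAbove (P i) x d := by simp [DirAbove, hd, hk]
    have hcd : c ≠ d := by rintro rfl; simp [PrefOver, Fin.lt_def, hd, hk] at hcx
    have hcx' : c ≠ x := by rintro rfl; exact lt_irrefl _ hcx
    have hstep := hpr P i x d c hxd hcx' hcd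
    set P' := Function.update P i (swapIn (P i) x d)
    have hP'i : P' i = swapIn (P i) x d := Function.update_self ..
    rw [← hstep, ← ih P' ?_ ?_, hP'i, moveToBot_swapIn hxd, Function.update_idem]
    · simp only [PrefOver, Fin.lt_def, hP'i, swapIn_apply, Equiv.swap_apply_left,
        Equiv.swap_apply_of_ne_of_ne hcx' hcd, hd] at hcx ⊢
      omega
    · simp only [hP'i, swapIn_apply, Equiv.swap_apply_left, hd]

lemma le_of_forall_prefOver [Nonempty C] (hv : IsVotingRule v) {ε : ℝ}
    (hsu : StrongUnanimity ε v) {d w : C} (hwd : w ≠ d) (P : Fin n → Pref C)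
    (hP : ∀ i, PrefOver (P i) d w) : v P w ≤ ε := by
  have hraise := Finset.apply_piecewise_eq_of_update (F := fun P => v P w)
    (p := fun R => PrefOver R d w) (g := fun R => moveToTop R d)
    (fun P i h => hpr.apply_update_moveToTop P i h) univ P fun i _ => hP i
  rw [Finset.piecewise_univ] at hraise
  have htop := hsu d (fun i => moveToTop (P i) d) fun i =>
    topC_eq_of_val (by rw [moveToTop_val, if_pos rfl])
  have := hv.add_le_one (fun i => moveToTop (P i) d) hwd
  linarith

end PairwiseResponsive

section Profiles

variable [Fintype C] {n : ℕ}

def splitProfile (L U : Pref C) (k : ℕ) : Fin n → Pref C :=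
  fun i => if (i : ℕ) < k then L else U

def pivotProfile (L R S U : Pref C) (k : ℕ) : Fin n → Pref C :=
  fun i =>
    if (i : ℕ) < k then L else if (i : ℕ) = k then R else if (i : ℕ) = k + 1 then S else U

lemma splitProfile_cases {p : Pref C → Prop} {L U : Pref C} (hL : p L) (hU : p U) (k : ℕ)
    (i : Fin n) : p (splitProfile L U k i) := by
  unfold splitProfile
  split_ifs <;> assumption

variable (L R S U : Pref C) (k : ℕ)

lemma splitProfile_eq_pivotProfile :
    (splitProfile L U k : Fin n → Pref C) = pivotProfile L U U U k := by
  funext i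
  simp only [splitProfile, pivotProfile]
  split_ifs <;> rfl

lemma splitProfile_succ_eq_pivotProfile :
    (splitProfile L U (k + 1) : Fin n → Pref C) = pivotProfile L L U U k := by
  funext i
  simp only [splitProfile, pivotProfile]
  split_ifs <;> first | rfl | omega

lemma splitProfile_add_two_eq_pivotProfile :
    (splitProfile L U (k + 2) : Fin n → Pref C) = pivotProfile L L L U k := by
  funext i
  simp only [splitProfile, pivotProfile]
  split_ifs <;> first | rfl | omega

lemma pivotProfile_comp_swap (hk : k + 1 < n) :
    pivotProfile L R S U k ∘ Equiv.swap ⟨k, by omega⟩ ⟨k + 1, hk⟩ =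
      pivotProfile L S R U k := by
  funext i
  simp only [Function.comp_apply, Equiv.swap_apply_def]
  split_ifs <;> simp only [pivotProfile, Fin.ext_iff] at * <;> split_ifs <;>
    first | rfl | omega

lemma update_pivotProfile (hk : k < n) (R' : Pref C) :
    Function.update (pivotProfile L R S U k) ⟨k, hk⟩ R' = pivotProfile L R' S U k := by
  funext i
  simp only [pivotProfile, Function.update_apply, Fin.ext_iff]
  split_ifs <;> first | rfl | omega

lemma Anonymous.apply_pivotProfile_comm {v : (Fin n → Pref C) → C → ℝ} (han : Anonymous v)
    (hk : k + 1 < n) (c : C) :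
    v (pivotProfile L R S U k) c = v (pivotProfile L S R U k) c := by
  rw [← pivotProfile_comp_swap L R S U k hk, han]

end Profiles

section SwapFamilies

variable [Fintype C] [DecidableEq C] {n : ℕ} {v : (Fin n → Pref C) → C → ℝ}

lemma PairwiseIsolated.pivotProfile_sub_eq (hpi : PairwiseIsolated v) {a b : C}
    {R : Pref C} (hR : DirAbove R a b) {L S U L' S' U' : Pref C}
    (hL : PrefOver L a b ↔ PrefOver L' a b) (hS : PrefOver S a b ↔ PrefOver S' a b)
    (hU : PrefOver U a b ↔ PrefOver U' a b) {k : ℕ} (hk : k < n) :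
    v (pivotProfile L' (swapIn R a b) S' U' k) b - v (pivotProfile L' R S' U' k) b =
      v (pivotProfile L (swapIn R a b) S U k) b - v (pivotProfile L R S U k) b := by
  have hRk : ∀ L S U : Pref C, (pivotProfile L R S U k : Fin n → Pref C) ⟨k, hk⟩ = R := by
    simp [pivotProfile]
  have := hpi ⟨k, hk⟩ (pivotProfile L R S U k) (pivotProfile L' R S' U' k) a b
    (by rwa [hRk]) (by rw [hRk, hRk]) fun j hj => by
      simp only [pivotProfile, ne_eq, Fin.ext_iff] at hj ⊢
      split_ifs <;> omega
  simpa only [hRk, update_pivotProfile] using this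

def swapFamilyProb (v : (Fin n → Pref C) → C → ℝ) (P : Pref C) (a b : C) (k : ℕ) : ℝ :=
  v (splitProfile (swapIn P a b) P k) b

/-- Both sides are the same double difference over the four profiles in which voter `k` reports
`P` or its swap and voter `k + 1` reports `Q` or its swap (or vice versa, by anonymity). -/
lemma swapFamilyProb_second_diff_eq (han : Anonymous v) (hpi : PairwiseIsolated v)
    {P Q : Pref C} {a b : C} (hP : DirAbove P a b) (hQ : DirAbove Q a b) {k : ℕ}
    (hk : k + 2 ≤ n) :
    swapFamilyProb v P a b (k + 2) - 2 * swapFamilyProb v P a b (k + 1) +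
        swapFamilyProb v P a b k =
      swapFamilyProb v Q a b (k + 2) - 2 * swapFamilyProb v Q a b (k + 1) +
        swapFamilyProb v Q a b k := by
  have hPQ : PrefOver P a b ↔ PrefOver Q a b :=
    iff_of_true (prefOver_of_dirAbove hP) (prefOver_of_dirAbove hQ)
  have hPQu : PrefOver (swapIn P a b) a b ↔ PrefOver (swapIn Q a b) a b :=
    iff_of_false (not_prefOver_swapIn_of_dirAbove hP) (not_prefOver_swapIn_of_dirAbove hQ)
  have comm := fun L R S U : Pref C => han.apply_pivotProfile_comm L R S U k (by omega) b
  have e1 := hpi.pivotProfile_sub_eq hP Iff.rfl hPQ Iff.rfl (k := k) (L := swapIn P a b) (U := P)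
    (by omega)
  have e2 := hpi.pivotProfile_sub_eq hP Iff.rfl hPQu Iff.rfl (k := k) (L := swapIn P a b) (U := P)
    (by omega)
  have e3 := hpi.pivotProfile_sub_eq hQ hPQu hPQ hPQ (k := k) (by omega)
  have e4 := hpi.pivotProfile_sub_eq hQ hPQu hPQu hPQ (k := k) (by omega)
  simp only [swapFamilyProb, splitProfile_add_two_eq_pivotProfile _ _ k,
    splitProfile_succ_eq_pivotProfile _ _ k, splitProfile_eq_pivotProfile _ _ k]
  linarith [comm (swapIn P a b) (swapIn P a b) P P, comm (swapIn Q a b) (swapIn Q a b) Q Q,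
    comm (swapIn P a b) (swapIn Q a b) P P, comm (swapIn P a b) Q P P,
    comm (swapIn P a b) (swapIn Q a b) (swapIn P a b) P, comm (swapIn P a b) Q (swapIn P a b) P]

lemma swapFamilyProb_reflection (han : Anonymous v) (hpi : PairwiseIsolated v) {P Q : Pref C}
    {a b : C} (hP : DirAbove P a b) (hQ : DirAbove Q a b) {q : ℕ} (hq : q ≤ n) :
    swapFamilyProb v P a b q + swapFamilyProb v P a b (n - q) -
        (swapFamilyProb v P a b 0 + swapFamilyProb v P a b n) =
      swapFamilyProb v Q a b q + swapFamilyProb v Q a b (n - q) -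
        (swapFamilyProb v Q a b 0 + swapFamilyProb v Q a b n) := by
  have := add_eq_add_of_second_diff_eq_zero
    (D := fun k => swapFamilyProb v P a b k - swapFamilyProb v Q a b k)
    (fun k hk => by linarith [swapFamilyProb_second_diff_eq han hpi hP hQ hk]) hq
  linarith

lemma abs_swapFamilyProb_reflection_sub_one_le [Nonempty C] (hv : IsVotingRule v)
    (han : Anonymous v) (hpr : PairwiseResponsive v) (hpi : PairwiseIsolated v) {ε : ℝ}
    (hsu : StrongUnanimity ε v) (hm : 3 ≤ Fintype.card C) {P : Pref C} {a b : C}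
    (hab : DirAbove P a b) (ha : (P a : ℕ) = Fintype.card C - 1) {q : ℕ} (hq : q ≤ n) :
    |swapFamilyProb v P a b q + swapFamilyProb v P a b (n - q) - 1| ≤ 3 * ε := by
  have hne : a ≠ b := by rintro rfl; simp [DirAbove] at hab
  obtain ⟨D, hD, z, hza, hzb, hzD⟩ := exists_dirAbove_not_top P hm hne
  have hzDu : PrefOver (swapIn D a b) z b := by
    unfold DirAbove at hD
    simpa [PrefOver, swapIn_apply, Equiv.swap_apply_of_ne_of_ne hza hzb, Fin.lt_def, hD] using hzD
  have hDbound : ∀ k, 0 ≤ swapFamilyProb v D a b k ∧ swapFamilyProb v D a b k ≤ ε :=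
    fun k => ⟨hv.1 _ _, hpr.le_of_forall_prefOver hv hsu hzb.symm _
      (splitProfile_cases (p := fun R => PrefOver R z b) hzDu
        ((prefOver_of_dirAbove hD).trans hzD) k)⟩
  have hP0 : swapFamilyProb v P a b 0 ≤ ε :=
    hpr.le_of_forall_prefOver hv hsu hne.symm _ fun i => by
      simpa [splitProfile] using prefOver_of_dirAbove hab
  have hPn : 1 - ε ≤ swapFamilyProb v P a b n :=
    hsu b _ fun i => topC_eq_of_val (by simpa [splitProfile, swapIn_apply] using ha)
  have hP0' : 0 ≤ swapFamilyProb v P a b 0 := hv.1 _ _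
  have hPn' : swapFamilyProb v P a b n ≤ 1 := hv.le_one _ _
  have hker := swapFamilyProb_reflection han hpi hab hD hq
  obtain ⟨h1, h2⟩ := hDbound q
  obtain ⟨h3, h4⟩ := hDbound (n - q)
  obtain ⟨h5, h6⟩ := hDbound 0
  obtain ⟨h7, h8⟩ := hDbound n
  rw [abs_le]
  constructor <;> linarith

lemma PairwiseResponsive.apply_splitProfile_moveToBot (hpr : PairwiseResponsive v)
    (L : Pref C) {R : Pref C} {x y : C} (hyx : PrefOver R y x) (j : ℕ) :
    v (splitProfile L (moveToBot R x) j) y = v (splitProfile L R j) y := by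
  have hlower := Finset.apply_piecewise_eq_of_update (F := fun P => v P y)
    (p := fun R => PrefOver R y x) (g := fun R => moveToBot R x)
    (fun P i h => hpr.apply_update_moveToBot P i h) (univ.filter fun i : Fin n => j ≤ i)
    (splitProfile L R j) fun i hi => by
      simpa [splitProfile, not_lt.2 (mem_filter.1 hi).2] using hyx
  have hprof : (univ.filter fun i : Fin n => j ≤ i).piecewise
      (fun i => moveToBot (splitProfile L R j i) x) (splitProfile L R j) =
        splitProfile L (moveToBot R x) j := by
    funext i
    simp only [Finset.piecewise, mem_filter, mem_univ, true_and, splitProfile]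
    split_ifs <;> first | omega | rfl
  rwa [hprof] at hlower

lemma one_sub_le_add_splitProfile [Nonempty C] (hv : IsVotingRule v)
    (hpr : PairwiseResponsive v) {ε : ℝ} (hsu : StrongUnanimity ε v) {x y : C} (hxy : x ≠ y)
    {L U : Pref C} (hL : ∀ c, c ≠ x → c ≠ y → PrefOver L y c)
    (hU : ∀ c, c ≠ x → c ≠ y → PrefOver U y c) (j : ℕ) :
    1 - (Fintype.card C - 2) * ε ≤ v (splitProfile L U j) x + v (splitProfile L U j) y :=
  hv.one_sub_le_add _ hxy fun c hcx hcy => hpr.le_of_forall_prefOver hv hsu hcy _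
    (splitProfile_cases (p := fun R => PrefOver R y c) (hL c hcx hcy) (hU c hcx hcy) j)

lemma abs_vTopCount_sub_swapFamilyProb_le [Nonempty C] (hv : IsVotingRule v)
    (hpr : PairwiseResponsive v) {ε : ℝ} (hsu : StrongUnanimity ε v) {e : Pref C} {x y : C}
    (hxy : DirAbove (moveToTop e x) x y) (j : ℕ) :
    |vTopCount v e x j - swapFamilyProb v (swapIn (moveToTop e x) x y) y x j| ≤
      (Fintype.card C - 2) * ε := by
  set T := moveToTop e x
  set B := swapIn T x y
  have hyx : y ≠ x := by rintro rfl; simp [DirAbove] at hxy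
  have hTx : (T x : ℕ) = Fintype.card C - 1 := by simp [T, moveToTop_val]
  have hByx : PrefOver B y x := by
    unfold DirAbove at hxy
    simp [B, PrefOver, Fin.lt_def, swapIn_apply, hxy]
  have hminor : ∀ c, c ≠ x → c ≠ y → PrefOver T y c ∧ PrefOver B y c := by
    intro c hcx hcy
    have := (T c).isLt
    have := Pref.val_ne (R := T) hcx
    have := Pref.val_ne (R := T) hcy
    unfold DirAbove at hxy
    simp only [B, PrefOver, Fin.lt_def, swapIn_apply, Equiv.swap_apply_right,
      Equiv.swap_apply_of_ne_of_ne hcx hcy]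
    omega
  have hBot : moveToBot B x = moveToBot e x := by
    rw [moveToBot_swapIn hxy, moveToBot_moveToTop]
  have hcanon := one_sub_le_add_splitProfile hv hpr hsu hyx.symm
    (fun c hcx hcy => (hminor c hcx hcy).1)
    (fun c hcx hcy => hBot ▸ prefOver_moveToBot (hminor c hcx hcy).2 hyx hcx) j
  have hswap := one_sub_le_add_splitProfile hv hpr hsu hyx.symm
    (fun c hcx hcy => (hminor c hcx hcy).1) (fun c hcx hcy => (hminor c hcx hcy).2) j
  have := hv.add_le_one (splitProfile T (moveToBot e x) j) hyx.symm
  have := hv.add_le_one (splitProfile T B j) hyx.symm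
  have := hBot ▸ hpr.apply_splitProfile_moveToBot T hByx j
  rw [show vTopCount v e x j = v (splitProfile T (moveToBot e x) j) x from rfl, swapFamilyProb,
    swapIn_swapIn, abs_le]
  constructor <;> linarith

end SwapFamilies

theorem top_count_reflection_general [Fintype C] [Nonempty C] [DecidableEq C] {n : ℕ}
    (hm : 3 ≤ Fintype.card C) (v : (Fin n → Pref C) → C → ℝ)
    (hv : IsVotingRule v) (han : Anonymous v) (hpr : PairwiseResponsive v)
    (hpi : PairwiseIsolated v) (ε : ℝ) (hsu : StrongUnanimity ε v)
    (e : Pref C) (x : C) (q : ℕ) (hq : q ≤ n) :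
    |vTopCount v e x (n - q) - (1 - vTopCount v e x q)| ≤
      66 * (Fintype.card C : ℝ) * ε := by
  set T := moveToTop e x
  have hTx : (T x : ℕ) = Fintype.card C - 1 := by simp [T, moveToTop_val]
  set y := T.symm ⟨Fintype.card C - 2, by omega⟩
  have hTy : (T y : ℕ) = Fintype.card C - 2 := by simp [y]
  have hxy : DirAbove T x y := by unfold DirAbove; omega
  have hyx : DirAbove (swapIn T x y) y x := by
    simp only [DirAbove, swapIn_apply, Equiv.swap_apply_left, Equiv.swap_apply_right]; omega
  have hε : 0 ≤ ε := by
    linarith [hsu x (fun _ => T) fun _ => topC_eq_of_val hTx, hv.le_one (fun _ => T) x]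
  have hmε := mul_nonneg (Nat.cast_nonneg (Fintype.card C) : (0 : ℝ) ≤ Fintype.card C) hε
  have hq' := abs_vTopCount_sub_swapFamilyProb_le hv hpr hsu hxy q
  have hnq' := abs_vTopCount_sub_swapFamilyProb_le hv hpr hsu hxy (n - q)
  have hrefl := abs_swapFamilyProb_reflection_sub_one_le hv han hpr hpi hsu hm hyx
    (by simpa [swapIn_apply] using hTx) hq
  rw [abs_le] at *
  constructor <;> linarith

/-- Reflection identity for the top-count function:
`|v'(x, n−q) − (1 − v'(x, q))| ≤ 66mε`. -/
theorem top_count_reflection [Fintype C] [Nonempty C] [DecidableEq C] {n : ℕ}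
    (hm : 3 ≤ Fintype.card C) (hn : 1 ≤ n) (v : (Fin n → Pref C) → C → ℝ)
    (hv : IsVotingRule v) (han : Anonymous v) (hpr : PairwiseResponsive v)
    (hpi : PairwiseIsolated v) (ε : ℝ) (hsu : StrongUnanimity ε v)
    (e : Pref C) (x : C) (q : ℕ) (hq : q ≤ n) :
    |vTopCount v e x (n - q) - (1 - vTopCount v e x q)| ≤
      66 * (Fintype.card C : ℝ) * ε :=
  top_count_reflection_general hm v hv han hpr hpi ε hsu e x q hq
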